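/- arXiv:2009.08032 — 2 statements merged into one kernel-verified Lean document; each statement's English description precedes it below -/
import Mathlib

section
/- Let s_1,…,s_ℓ and t_1,…,t_ℓ be reals with t_i > 0, Σ t_i = m, and Σ s_i ≥ (1/2+ε)m. Then Σ_{i=1}^ℓ (2s_i − t_i)²/√t_i ≥ 4ε² m^{3/2}/√ℓ. -/
/-!
Write `T = ∑ (2 sᵢ - tᵢ) = 2 ∑ sᵢ - m ≥ 2 ε m ≥ 0`. Sedrakyan's lemma with weights `√tᵢ` gives
`∑ (2 sᵢ - tᵢ)² / √tᵢ ≥ T² / ∑ √tᵢ`, and Cauchy–Schwarz gives `∑ √tᵢ ≤ √ℓ √m`,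
so the sum is at least `(2 ε m)² / (√ℓ √m) = 4 ε² m^{3/2} / √ℓ`.
-/

open Finset Real

theorem Finset.sum_sqrt_le_sqrt_card_mul_sqrt_sum {ι : Type*} (s : Finset ι) {t : ι → ℝ}
    (ht : ∀ i ∈ s, 0 ≤ t i) : ∑ i ∈ s, √(t i) ≤ √(#s : ℝ) * √(∑ i ∈ s, t i) := by
  rw [← sqrt_mul (Nat.cast_nonneg _), le_sqrt (sum_nonneg fun i _ ↦ sqrt_nonneg _)
    (mul_nonneg (Nat.cast_nonneg _) (sum_nonneg ht))]
  calc (∑ i ∈ s, √(t i)) ^ 2 ≤ #s * ∑ i ∈ s, √(t i) ^ 2 := sq_sum_le_card_mul_sum_sq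
    _ = #s * ∑ i ∈ s, t i := by rw [sum_congr rfl fun i hi ↦ sq_sqrt (ht i hi)]

theorem Finset.sq_sum_div_sqrt_card_mul_sqrt_sum_le {ι : Type*} (s : Finset ι) (x : ι → ℝ)
    {t : ι → ℝ} (ht : ∀ i ∈ s, 0 < t i) :
    (∑ i ∈ s, x i) ^ 2 / (√(#s : ℝ) * √(∑ i ∈ s, t i)) ≤ ∑ i ∈ s, x i ^ 2 / √(t i) := by
  rcases s.eq_empty_or_nonempty with rfl | hs
  · simp
  have hsqrt : ∀ i ∈ s, 0 < √(t i) := fun i hi ↦ sqrt_pos.2 (ht i hi)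
  calc (∑ i ∈ s, x i) ^ 2 / (√(#s : ℝ) * √(∑ i ∈ s, t i))
      ≤ (∑ i ∈ s, x i) ^ 2 / ∑ i ∈ s, √(t i) :=
        div_le_div_of_nonneg_left (sq_nonneg _) (sum_pos hsqrt hs)
          (s.sum_sqrt_le_sqrt_card_mul_sqrt_sum fun i hi ↦ (ht i hi).le)
    _ ≤ ∑ i ∈ s, x i ^ 2 / √(t i) := sq_sum_div_le_sum_sq_div s x hsqrt

theorem Real.rpow_three_halves_eq_sq_div_sqrt {m : ℝ} (hm : 0 ≤ m) : m ^ ((3 : ℝ) / 2) = m ^ 2 / √m := by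
  rw [sqrt_eq_rpow, ← rpow_two, ← rpow_sub' hm (by norm_num)]
  norm_num

theorem sum_sq_div_sqrt_lower_bound_general
    (ℓ : ℕ) (s t : Fin ℓ → ℝ) (m ε : ℝ)
    (hε : 0 ≤ ε)
    (ht : ∀ i, 0 < t i) (htm : ∑ i, t i = m)
    (hs : (1/2 + ε) * m ≤ ∑ i, s i) :
    4 * ε ^ 2 * m ^ ((3 : ℝ) / 2) / Real.sqrt ℓ ≤
      ∑ i, (2 * s i - t i) ^ 2 / Real.sqrt (t i) := by
  have hm : 0 ≤ m := htm ▸ sum_nonneg fun i _ ↦ (ht i).le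
  have hT : 2 * ε * m ≤ ∑ i, (2 * s i - t i) := by
    rw [sum_sub_distrib, ← mul_sum, htm]
    linarith
  calc 4 * ε ^ 2 * m ^ ((3 : ℝ) / 2) / √ℓ = (2 * ε * m) ^ 2 / (√ℓ * √m) := by
        rw [rpow_three_halves_eq_sq_div_sqrt hm]
        ring
    _ ≤ (∑ i, (2 * s i - t i)) ^ 2 / (√ℓ * √m) := by gcongr
    _ ≤ ∑ i, (2 * s i - t i) ^ 2 / √(t i) := by
        simpa [htm] using univ.sq_sum_div_sqrt_card_mul_sqrt_sum_le (fun i ↦ 2 * s i - t i)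
          fun i _ ↦ ht i

/-- If `t_i > 0`, `Σ t_i = m`, and `Σ s_i ≥ (1/2 + ε) m`, then
`Σ (2 s_i − t_i)² / √t_i ≥ 4 ε² m^{3/2} / √ℓ`. -/
theorem sum_sq_div_sqrt_lower_bound
    (ℓ : ℕ) (hℓ : 0 < ℓ) (s t : Fin ℓ → ℝ) (m ε : ℝ)
    (hm : 0 < m) (hε : 0 ≤ ε)
    (ht : ∀ i, 0 < t i) (htm : ∑ i, t i = m)
    (hs : (1/2 + ε) * m ≤ ∑ i, s i) :
    4 * ε ^ 2 * m ^ ((3 : ℝ) / 2) / Real.sqrt ℓ ≤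
      ∑ i, (2 * s i - t i) ^ 2 / Real.sqrt (t i) :=
  sum_sq_div_sqrt_lower_bound_general ℓ s t m ε hε ht htm hs
end

section
/- Let φ be a k-XOR instance with odd k, and let ψ be the partitioned 2-XOR instance obtained by splitting each constraint e ∈ E into a vertex i and two disjoint (k−1)/2-sets e_1, e_2 with i ∪ e_1 ∪ e_2 = e, placing constraint (e_1,e_2) in part i with sign r'_i(e_1,e_2) = r(e). Then val_ψ ≥ val_φ. -/
/-!
Every assignment `x` of the `k`-XOR instance is matched by the assignment `x'_S = x^S`,
`y' = x` of the partitioned instance: since `e` is the disjoint union of `{i}`, `e₁` and `e₂`,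
`x'_{e₁} x'_{e₂} y'_i = x^e`, so both assignments satisfy exactly the same constraints.
-/

open Finset

/-- Boolean (±1) assignments on an index type. -/
def BoolFun (ι : Type*) : Type _ := {x : ι → ℝ // ∀ i, x i = 1 ∨ x i = -1}

instance (ι : Type*) : Nonempty (BoolFun ι) := ⟨⟨fun _ => 1, fun _ => Or.inl rfl⟩⟩

theorem prod_insert_union_of_disjoint {ι M : Type*} [DecidableEq ι] [CommMonoid M]
    (f : ι → M) {a : ι} {s t : Finset ι} (has : a ∉ s) (hat : a ∉ t) (hst : Disjoint s t) :
    ∏ w ∈ insert a (s ∪ t), f w = (∏ w ∈ s, f w) * (∏ w ∈ t, f w) * f a := by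
  rw [prod_insert (by simp [has, hat]), prod_union hst, mul_comm]

namespace BoolFun

variable {ι : Type*}

theorem prod_eq_one_or_neg_one (x : BoolFun ι) (S : Finset ι) :
    ∏ w ∈ S, x.1 w = 1 ∨ ∏ w ∈ S, x.1 w = -1 := by
  classical
  induction S using Finset.induction with
  | empty => simp
  | insert a s has ih =>
    rw [prod_insert has]
    rcases x.2 a with hxa | hxa <;> rcases ih with hs | hs <;> simp [hxa, hs]

def subsetProd (x : BoolFun ι) : BoolFun (Finset ι) :=
  ⟨fun S => ∏ w ∈ S, x.1 w, prod_eq_one_or_neg_one x⟩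

end BoolFun

theorem bddAbove_range_card_filter_div {α : Type*} {m : ℕ} (P : α → Fin m → Prop)
    [∀ a, DecidablePred (P a)] :
    BddAbove (Set.range fun a => ((univ.filter (P a)).card : ℝ) / m) := by
  refine ⟨(m : ℝ) / m, ?_⟩
  rintro _ ⟨a, rfl⟩
  refine div_le_div_of_nonneg_right ?_ m.cast_nonneg
  exact_mod_cast (card_filter_le _ _).trans_eq (card_fin m)

theorem odd_kxor_to_partitioned_2xor_general
    (n m : ℕ)
    (e : Fin m → Finset (Fin n))
    (r : Fin m → ℝ)
    (i : Fin m → Fin n) (e₁ e₂ : Fin m → Finset (Fin n))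
    (hi₁ : ∀ c, i c ∉ e₁ c) (hi₂ : ∀ c, i c ∉ e₂ c)
    (hdisj : ∀ c, Disjoint (e₁ c) (e₂ c))
    (hunion : ∀ c, insert (i c) (e₁ c ∪ e₂ c) = e c) :
    (⨆ x : BoolFun (Fin n),
        ((univ.filter fun c => (∏ w ∈ e c, x.1 w) * r c = 1).card : ℝ) / m) ≤
      ⨆ p : BoolFun (Finset (Fin n)) × BoolFun (Fin n),
        ((univ.filter fun c =>
            p.1.1 (e₁ c) * p.1.1 (e₂ c) * p.2.1 (i c) * r c = 1).card : ℝ) / m := by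
  refine ciSup_le fun x => le_ciSup_of_le (bddAbove_range_card_filter_div _)
    (x.subsetProd, x) (le_of_eq ?_)
  have hsplit : ∀ c, ∏ w ∈ e c, x.1 w =
      x.subsetProd.1 (e₁ c) * x.subsetProd.1 (e₂ c) * x.1 (i c) := fun c => by
    rw [← hunion c, prod_insert_union_of_disjoint _ (hi₁ c) (hi₂ c) (hdisj c)]
    rfl
  simp only [hsplit]

/-- Let `φ` be a `k`-XOR instance with odd `k` (constraints `e c` of size `k`, signs
`r c = ±1`), and let `ψ` be the partitioned 2-XOR instance obtained by splitting each
constraint into a vertex `i c` and two disjoint `(k−1)/2`-sets `e₁ c, e₂ c` whose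
union with `i c` is `e c`, with the sign carried over.  Then `val_ψ ≥ val_φ`. -/
theorem odd_kxor_to_partitioned_2xor
    (k n m : ℕ) (hk : Odd k) (hm : 0 < m)
    (e : Fin m → Finset (Fin n)) (he : ∀ c, (e c).card = k)
    (r : Fin m → ℝ) (hr : ∀ c, r c = 1 ∨ r c = -1)
    (i : Fin m → Fin n) (e₁ e₂ : Fin m → Finset (Fin n))
    (hi₁ : ∀ c, i c ∉ e₁ c) (hi₂ : ∀ c, i c ∉ e₂ c)
    (hdisj : ∀ c, Disjoint (e₁ c) (e₂ c))
    (hcard₁ : ∀ c, (e₁ c).card = (k - 1) / 2)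
    (hcard₂ : ∀ c, (e₂ c).card = (k - 1) / 2)
    (hunion : ∀ c, insert (i c) (e₁ c ∪ e₂ c) = e c) :
    (⨆ x : BoolFun (Fin n),
        ((univ.filter fun c => (∏ w ∈ e c, x.1 w) * r c = 1).card : ℝ) / m) ≤
      ⨆ p : BoolFun (Finset (Fin n)) × BoolFun (Fin n),
        ((univ.filter fun c =>
            p.1.1 (e₁ c) * p.1.1 (e₂ c) * p.2.1 (i c) * r c = 1).card : ℝ) / m :=
  odd_kxor_to_partitioned_2xor_general n m e r i e₁ e₂ hi₁ hi₂ hdisj hunion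
end
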